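/- If G and H are connected finite simple graphs with maximum degrees Δ(G) ≥ 2 and Δ(H) ≥ 2, then χ_i(G × H) ≥ max{χ_i(G) + Δ(H), χ_i(H) + Δ(G)}. -/

import Mathlib

open SimpleGraph Finset

variable {α β : Type*}

/-- The direct (tensor) product of two simple graphs. -/
def directProd (G : SimpleGraph α) (H : SimpleGraph β) : SimpleGraph (α × β) where
  Adj x y := G.Adj x.1 y.1 ∧ H.Adj x.2 y.2
  symm := ⟨fun x y h => ⟨h.1.symm, h.2.symm⟩⟩
  loopless := ⟨fun x h => G.irrefl h.1⟩

/-- The strong product of two simple graphs. -/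
def strongProd (G : SimpleGraph α) (H : SimpleGraph β) : SimpleGraph (α × β) where
  Adj x y := (x.1 = y.1 ∧ H.Adj x.2 y.2) ∨ (G.Adj x.1 y.1 ∧ x.2 = y.2) ∨
    (G.Adj x.1 y.1 ∧ H.Adj x.2 y.2)
  symm := ⟨by
    rintro x y (⟨h1, h2⟩ | ⟨h1, h2⟩ | ⟨h1, h2⟩)
    · exact Or.inl ⟨h1.symm, h2.symm⟩
    · exact Or.inr (Or.inl ⟨h1.symm, h2.symm⟩)
    · exact Or.inr (Or.inr ⟨h1.symm, h2.symm⟩)⟩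
  loopless := ⟨by
    rintro x (⟨_, h⟩ | ⟨h, _⟩ | ⟨h, _⟩)
    · exact H.irrefl h
    · exact G.irrefl h
    · exact G.irrefl h⟩

/-- The lexicographic product of two simple graphs. -/
def lexProd (G : SimpleGraph α) (H : SimpleGraph β) : SimpleGraph (α × β) where
  Adj x y := G.Adj x.1 y.1 ∨ (x.1 = y.1 ∧ H.Adj x.2 y.2)
  symm := ⟨by
    rintro x y (h | ⟨h1, h2⟩)
    · exact Or.inl h.symm
    · exact Or.inr ⟨h1.symm, h2.symm⟩⟩
  loopless := ⟨by
    rintro x (h | ⟨_, h⟩)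
    · exact G.irrefl h
    · exact H.irrefl h⟩

/-- The corona product `G ⊙ H`: vertex `(v, none)` is the vertex `v` of `G`, and
`(v, some h)` is the vertex `h` of the copy of `H` attached at `v`. -/
def corona (G : SimpleGraph α) (H : SimpleGraph β) : SimpleGraph (α × Option β) where
  Adj x y :=
    (x.2 = none ∧ y.2 = none ∧ G.Adj x.1 y.1) ∨
    (x.1 = y.1 ∧ x.2 = none ∧ y.2 ≠ none) ∨
    (x.1 = y.1 ∧ x.2 ≠ none ∧ y.2 = none) ∨
    (x.1 = y.1 ∧ ∃ a b, x.2 = some a ∧ y.2 = some b ∧ H.Adj a b)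
  symm := ⟨by
    rintro x y (⟨h1, h2, h3⟩ | ⟨h1, h2, h3⟩ | ⟨h1, h2, h3⟩ | ⟨h1, a, b, h2, h3, h4⟩)
    · exact Or.inl ⟨h2, h1, h3.symm⟩
    · exact Or.inr (Or.inr (Or.inl ⟨h1.symm, h3, h2⟩))
    · exact Or.inr (Or.inl ⟨h1.symm, h3, h2⟩)
    · exact Or.inr (Or.inr (Or.inr ⟨h1.symm, b, a, h3, h2, h4.symm⟩))⟩
  loopless := ⟨by
    rintro x (⟨_, _, h⟩ | ⟨_, h1, h2⟩ | ⟨_, h1, h2⟩ | ⟨_, a, b, h2, h3, h4⟩)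
    · exact G.irrefl h
    · exact h2 h1
    · exact h1 h2
    · rw [h2] at h3
      injection h3 with h5
      subst h5
      exact H.irrefl h4⟩

/-- `f` is an injective coloring of `G`: no vertex has two distinct neighbors
with the same color. -/
def IsInjColoring {V : Type*} (G : SimpleGraph V) {n : ℕ} (f : V → Fin n) : Prop :=
  ∀ v u w, G.Adj v u → G.Adj v w → u ≠ w → f u ≠ f w

/-- The injective chromatic number: the least `n` such that `G` admits an
injective coloring with `n` colors. -/
noncomputable def injChrom {V : Type*} (G : SimpleGraph V) : ℕ :=
  sInf {n | ∃ f : V → Fin n, IsInjColoring G f}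

/-- `f` is a 2-distance coloring of `G`: distinct vertices at distance at most
two get distinct colors. -/
def IsDistTwoColoring {V : Type*} (G : SimpleGraph V) {n : ℕ} (f : V → Fin n) : Prop :=
  ∀ u v, u ≠ v → (G.Adj u v ∨ ∃ w, G.Adj u w ∧ G.Adj w v) → f u ≠ f v

/-- The 2-distance chromatic number of `G`. -/
noncomputable def distTwoChrom {V : Type*} (G : SimpleGraph V) : ℕ :=
  sInf {n | ∃ f : V → Fin n, IsDistTwoColoring G f}


private lemma every_vertex_has_neighbor {α : Type*} [Fintype α] (G : SimpleGraph α)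
    [DecidableRel G.Adj] (hG : G.Connected) (hΔ : 2 ≤ G.maxDegree) (v : α) :
    ∃ u, G.Adj v u := by
  have hn : Nonempty α := hG.nonempty
  obtain ⟨w, hw⟩ := G.exists_maximal_degree_vertex
  by_cases hvw : v = w
  · subst hvw
    rw [← SimpleGraph.degree_pos_iff_exists_adj]
    omega
  · obtain ⟨p⟩ := hG.preconnected v w
    cases p with
    | nil => exact absurd rfl hvw
    | cons h _ => exact ⟨_, h⟩

private lemma key_directProd {α β : Type*} [Fintype α] [Fintype β]
    (G : SimpleGraph α) (H : SimpleGraph β)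
    [DecidableRel G.Adj] [DecidableRel H.Adj]
    (hG : G.Connected) (hH : H.Connected)
    (hΔG : 2 ≤ G.maxDegree) (hΔH : 2 ≤ H.maxDegree)
    {k : ℕ} (c : α × β → Fin k) (hc : IsInjColoring (directProd G H) c) :
    injChrom G + H.maxDegree ≤ k := by
  set D := H.maxDegree with hD
  have hnβ : Nonempty β := hH.nonempty
  obtain ⟨h, hh⟩ := H.exists_maximal_degree_vertex
  have hcard : (H.neighborFinset h).card = D := by
    rw [SimpleGraph.card_neighborFinset_eq_degree]
    exact hh.symm
  set S : α → Finset (Fin k) := fun g => (H.neighborFinset h).image (fun y => c (g, y)) with hS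
  have hadj : ∀ g : α, ∃ g', G.Adj g g' :=
    fun g => every_vertex_has_neighbor G hG hΔG g
  have hScard : ∀ g, (S g).card = D := by
    intro g
    obtain ⟨g', hg'⟩ := hadj g
    rw [hS]
    rw [Finset.card_image_of_injOn, hcard]
    intro y1 hy1 y2 hy2 hcc
    by_contra hne
    exact hc (g', h) (g, y1) (g, y2)
      ⟨hg'.symm, (H.mem_neighborFinset h y1).1 hy1⟩
      ⟨hg'.symm, (H.mem_neighborFinset h y2).1 hy2⟩
      (fun e => hne (congrArg Prod.snd e)) hcc
  have hdisj : ∀ v u w, G.Adj v u → G.Adj v w → u ≠ w → Disjoint (S u) (S w) := by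
    intro v u w h1 h2 huw
    rw [Finset.disjoint_left]
    intro x hxu hxw
    simp only [hS, Finset.mem_image] at hxu hxw
    obtain ⟨y1, hy1, e1⟩ := hxu
    obtain ⟨y2, hy2, e2⟩ := hxw
    exact hc (v, h) (u, y1) (w, y2)
      ⟨h1, (H.mem_neighborFinset h y1).1 hy1⟩
      ⟨h2, (H.mem_neighborFinset h y2).1 hy2⟩
      (fun e => huw (congrArg Prod.fst e)) (e1.trans e2.symm)
  have hk : 2 * D ≤ k := by
    have hnα : Nonempty α := hG.nonempty
    obtain ⟨v₀, hv₀⟩ := G.exists_maximal_degree_vertex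
    have h1 : 1 < (G.neighborFinset v₀).card := by
      rw [SimpleGraph.card_neighborFinset_eq_degree]; omega
    rw [Finset.one_lt_card] at h1
    obtain ⟨u, hu, w, hw, huw⟩ := h1
    have hd := hdisj v₀ u w ((G.mem_neighborFinset v₀ u).1 hu)
      ((G.mem_neighborFinset v₀ w).1 hw) huw
    have hun := Finset.card_union_of_disjoint hd
    have hle : (S u ∪ S w).card ≤ Fintype.card (Fin k) := Finset.card_le_univ _
    rw [Fintype.card_fin] at hle
    have h2 := hScard u
    have h3 := hScard w
    omega
  have hSne : ∀ g, (S g).Nonempty := by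
    intro g
    rw [← Finset.card_pos, hScard]
    omega
  set T : ℕ := k - 2 * D + 1 with hT
  set f : α → Fin (T + 1) := fun g => ⟨min ((S g).min' (hSne g)).val T,
    Nat.lt_succ_of_le (min_le_right _ _)⟩ with hf
  have hfcol : IsInjColoring G f := by
    intro v u w h1 h2 huw
    have hd := hdisj v u w h1 h2 huw
    set a : Fin k := (S u).min' (hSne u) with ha
    set b : Fin k := (S w).min' (hSne w) with hb
    have hab : a.val ≠ b.val := by
      intro e
      have hba : a = b := Fin.val_injective e
      have hbmem : b ∈ S w := Finset.min'_mem _ (hSne w)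
      rw [← hba] at hbmem
      exact Finset.disjoint_left.1 hd (Finset.min'_mem _ (hSne u)) hbmem
    have hTT : ¬(T ≤ a.val ∧ T ≤ b.val) := by
      rintro ⟨hta, htb⟩
      have hsub : (S u).image Fin.val ∪ (S w).image Fin.val ⊆ Finset.Ico T k := by
        intro x hx
        rw [Finset.mem_union] at hx
        rw [Finset.mem_Ico]
        rcases hx with hx | hx <;> rw [Finset.mem_image] at hx <;>
          obtain ⟨y, hy, rfl⟩ := hx
        · exact ⟨le_trans hta (Finset.min'_le _ _ hy), y.isLt⟩
        · exact ⟨le_trans htb (Finset.min'_le _ _ hy), y.isLt⟩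
      have hdi : Disjoint ((S u).image Fin.val) ((S w).image Fin.val) :=
        (Finset.disjoint_image Fin.val_injective).2 hd
      have hcu := Finset.card_union_of_disjoint hdi
      have hle := Finset.card_le_card hsub
      rw [hcu] at hle
      rw [Finset.card_image_of_injective _ Fin.val_injective,
        Finset.card_image_of_injective _ Fin.val_injective, hScard, hScard,
        Nat.card_Ico] at hle
      omega
    intro e
    have he : min a.val T = min b.val T := congrArg Fin.val e
    omega
  have hle : injChrom G ≤ T + 1 := Nat.sInf_le ⟨f, hfcol⟩
  omega

/-- for connected finite graphs with `Δ(G), Δ(H) ≥ 2`,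
`χ_i(G × H) ≥ max {χ_i(G) + Δ(H), χ_i(H) + Δ(G)}`. -/
theorem injChrom_directProd_ge {α β : Type*} [Fintype α] [Fintype β]
    (G : SimpleGraph α) (H : SimpleGraph β)
    [DecidableRel G.Adj] [DecidableRel H.Adj]
    (hG : G.Connected) (hH : H.Connected)
    (hΔG : 2 ≤ G.maxDegree) (hΔH : 2 ≤ H.maxDegree) :
    injChrom (directProd G H) ≥
      max (injChrom G + H.maxDegree) (injChrom H + G.maxDegree) := by
  
  have hsetne : {n | ∃ f : α × β → Fin n, IsInjColoring (directProd G H) f}.Nonempty := by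
    refine ⟨Fintype.card (α × β), Fintype.equivFin (α × β), ?_⟩
    intro v u w h1 h2 huw e
    exact huw ((Fintype.equivFin (α × β)).injective e)
  obtain ⟨c, hc⟩ := Nat.sInf_mem hsetne
  have h1 : injChrom G + H.maxDegree ≤ injChrom (directProd G H) :=
    key_directProd G H hG hH hΔG hΔH c hc
  have hc' : IsInjColoring (directProd H G)
      (fun p : β × α => c (p.2, p.1)) := by
    intro v u w a1 a2 huw
    exact hc (v.2, v.1) (u.2, u.1) (w.2, w.1) ⟨a1.2, a1.1⟩ ⟨a2.2, a2.1⟩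
      (fun e => huw (Prod.ext (congrArg Prod.snd e) (congrArg Prod.fst e)))
  have h2 : injChrom H + G.maxDegree ≤ injChrom (directProd G H) :=
    key_directProd H G hH hG hΔH hΔG _ hc'
  exact max_le h1 h2
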